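/- Under Assumptions (A1)–(A2), for every ε > 0, α ∈ ℝ and T > 0, the function x ↦ exp(T U^{ε,α}(x)) is continuous, bounded on ℝ^d (with supremum at most exp(T sup_x max(U^{ε,α}(x), 0)) < ∞), and tends to 0 as |x| → ∞; in particular, for every δ > 0 there exists R_δ > 0 such that sup_{|x| > R_δ} exp(T U^{ε,α}(x)) < δ. Thus exp(T U^{ε,α}) belongs to the space C₀ of continuous functions on ℝ^d vanishing at infinity. -/

import Mathlib

open Filter MeasureTheory
open scoped RealInnerProductSpace

set_option maxHeartbeats 1000000

noncomputable section

/-- The Laplacian of `V : ℝ^d → ℝ` at `x`: the trace of the Hessian,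
computed as the sum of the second directional derivatives along the
standard orthonormal basis. -/
def laplacian {d : ℕ} (V : EuclideanSpace ℝ (Fin d) → ℝ) (x : EuclideanSpace ℝ (Fin d)) : ℝ :=
  ∑ i, fderiv ℝ (fderiv ℝ V) x (EuclideanSpace.single i 1) (EuclideanSpace.single i 1)

/-- The divergence `∇·b` of a vector field `b : ℝ^d → ℝ^d` at `x`:
the trace of the Jacobian. -/
def diverg {d : ℕ} (b : EuclideanSpace ℝ (Fin d) → EuclideanSpace ℝ (Fin d))
    (x : EuclideanSpace ℝ (Fin d)) : ℝ :=
  ∑ i, fderiv ℝ b x (EuclideanSpace.single i 1) i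

/-- Assumptions (A1)–(A2) of the paper: `V` is `C^∞` with
`⟪x, H₀ ∇V(x)⟫ ≥ ‖x‖²` for large `‖x‖` (for some symmetric positive-definite `H₀`)
and `‖D²V(x)‖ = o(‖∇V(x)‖)` as `‖x‖ → ∞`; the vector field `b` is `C^∞` and bounded
in `C¹`, and `⟪b, ∇V⟫ ≤ c‖∇V‖²` for some constant `0 < c < 1/2`. -/
structure Assumptions {d : ℕ} (V : EuclideanSpace ℝ (Fin d) → ℝ)
    (b : EuclideanSpace ℝ (Fin d) → EuclideanSpace ℝ (Fin d)) : Prop where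
  smooth_V : ContDiff ℝ (⊤ : ℕ∞) V
  coercive : ∃ (H₀ : EuclideanSpace ℝ (Fin d) →L[ℝ] EuclideanSpace ℝ (Fin d)) (R₀ : ℝ),
    0 ≤ R₀ ∧ IsSelfAdjoint H₀ ∧ (∀ x : EuclideanSpace ℝ (Fin d), x ≠ 0 → 0 < ⟪x, H₀ x⟫) ∧
      ∀ x : EuclideanSpace ℝ (Fin d), R₀ ≤ ‖x‖ → ‖x‖ ^ 2 ≤ ⟪x, H₀ (gradient V x)⟫
  hessian_little_o : ∀ δ > (0 : ℝ), ∃ Rδ : ℝ, ∀ x : EuclideanSpace ℝ (Fin d),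
    Rδ ≤ ‖x‖ → ‖fderiv ℝ (fderiv ℝ V) x‖ ≤ δ * ‖gradient V x‖
  smooth_b : ContDiff ℝ (⊤ : ℕ∞) b
  bounded_b : ∃ B : ℝ, ∀ x : EuclideanSpace ℝ (Fin d), ‖b x‖ + ‖fderiv ℝ b x‖ ≤ B
  b_grad_V : ∃ c : ℝ, 0 < c ∧ c < 1 / 2 ∧
    ∀ x : EuclideanSpace ℝ (Fin d), ⟪b x, gradient V x⟫ ≤ c * ‖gradient V x‖ ^ 2

/-- The potential `U^{ε,α}` appearing in the Feynman–Kac semigroup: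
`U^{ε,α} = −‖∇V‖²/(4ε) + ⟪b, ∇V⟫/(2ε) − α(1−α)‖b‖²/ε + ΔV/2 − α ∇·b`. -/
def Upot {d : ℕ} (V : EuclideanSpace ℝ (Fin d) → ℝ)
    (b : EuclideanSpace ℝ (Fin d) → EuclideanSpace ℝ (Fin d)) (ε α : ℝ)
    (x : EuclideanSpace ℝ (Fin d)) : ℝ :=
  -(1 / (4 * ε)) * ‖gradient V x‖ ^ 2 + (1 / (2 * ε)) * ⟪b x, gradient V x⟫
    - (α * (1 - α) / ε) * ‖b x‖ ^ 2 + (1 / 2) * laplacian V x - α * diverg b x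


section AuxExpU

variable {d : ℕ} {V : EuclideanSpace ℝ (Fin d) → ℝ}
    {b : EuclideanSpace ℝ (Fin d) → EuclideanSpace ℝ (Fin d)}

private lemma coord_le_norm (i : Fin d) (v : EuclideanSpace ℝ (Fin d)) : |v i| ≤ ‖v‖ := by
  have h := abs_real_inner_le_norm (EuclideanSpace.single i (1:ℝ)) v
  rw [EuclideanSpace.inner_single_left] at h
  simpa [EuclideanSpace.norm_single] using h

private lemma gradient_cont (hV : ContDiff ℝ (⊤ : ℕ∞) V) : Continuous (gradient V) := by
  have h : Continuous (fderiv ℝ V) := hV.continuous_fderiv (by simp)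
  exact ((InnerProductSpace.toDual ℝ _).symm.continuous.comp h : _)

private lemma hess_cont (hV : ContDiff ℝ (⊤ : ℕ∞) V) :
    Continuous (fun x => fderiv ℝ (fderiv ℝ V) x) := by
  have h : ContDiff ℝ (⊤ : ℕ∞) (fderiv ℝ V) := hV.fderiv_right (by simp)
  exact h.continuous_fderiv (by simp)

private lemma laplacian_cont (hV : ContDiff ℝ (⊤ : ℕ∞) V) : Continuous (laplacian V) := by
  unfold laplacian
  exact continuous_finset_sum _ fun i _ =>
    (((hess_cont hV).clm_apply continuous_const).clm_apply continuous_const)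

private lemma diverg_cont (hb : ContDiff ℝ (⊤ : ℕ∞) b) : Continuous (diverg b) := by
  unfold diverg
  refine continuous_finset_sum _ fun i _ => ?_
  have h1 : Continuous (fun x => fderiv ℝ b x (EuclideanSpace.single i 1)) :=
    (hb.continuous_fderiv (by simp)).clm_apply continuous_const
  exact (EuclideanSpace.proj i).continuous.comp h1

private lemma Upot_cont (hA : Assumptions V b) (ε α : ℝ) : Continuous (Upot V b ε α) := by
  have hg := gradient_cont hA.smooth_V
  have hbc := hA.smooth_b.continuous
  unfold Upot
  exact (((((continuous_const.mul (hg.norm.pow 2)).add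
    (continuous_const.mul (hbc.inner hg))).sub
    (continuous_const.mul (hbc.norm.pow 2))).add
    (continuous_const.mul (laplacian_cont hA.smooth_V))).sub
    (continuous_const.mul (diverg_cont hA.smooth_b)))

private lemma laplacian_le (x : EuclideanSpace ℝ (Fin d)) :
    laplacian V x ≤ (d : ℝ) * ‖fderiv ℝ (fderiv ℝ V) x‖ := by
  have key : ∀ i : Fin d,
      fderiv ℝ (fderiv ℝ V) x (EuclideanSpace.single i 1) (EuclideanSpace.single i 1)
        ≤ ‖fderiv ℝ (fderiv ℝ V) x‖ := by
    intro i
    have hs : ‖(EuclideanSpace.single i (1:ℝ) : EuclideanSpace ℝ (Fin d))‖ = 1 := by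
      simp [EuclideanSpace.norm_single]
    have h1 := (fderiv ℝ (fderiv ℝ V) x (EuclideanSpace.single i 1)).le_opNorm
      (EuclideanSpace.single i (1:ℝ))
    have h2 := (fderiv ℝ (fderiv ℝ V) x).le_opNorm (EuclideanSpace.single i (1:ℝ))
    rw [hs, mul_one] at h1 h2
    exact le_trans (Real.le_norm_self _) (le_trans h1 h2)
  calc laplacian V x ≤ ∑ _i : Fin d, ‖fderiv ℝ (fderiv ℝ V) x‖ :=
        Finset.sum_le_sum fun i _ => key i
    _ = (d : ℝ) * ‖fderiv ℝ (fderiv ℝ V) x‖ := by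
        rw [Finset.sum_const, Finset.card_univ, Fintype.card_fin, nsmul_eq_mul]

private lemma abs_diverg_le (x : EuclideanSpace ℝ (Fin d)) :
    |diverg b x| ≤ (d : ℝ) * ‖fderiv ℝ b x‖ := by
  have key : ∀ i : Fin d,
      |(fderiv ℝ b x (EuclideanSpace.single i 1)) i| ≤ ‖fderiv ℝ b x‖ := by
    intro i
    have hs : ‖(EuclideanSpace.single i (1:ℝ) : EuclideanSpace ℝ (Fin d))‖ = 1 := by
      simp [EuclideanSpace.norm_single]
    have h1 := coord_le_norm i (fderiv ℝ b x (EuclideanSpace.single i 1))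
    have h2 := (fderiv ℝ b x).le_opNorm (EuclideanSpace.single i (1:ℝ))
    rw [hs, mul_one] at h2
    exact le_trans h1 h2
  calc |diverg b x| ≤ ∑ i : Fin d, |(fderiv ℝ b x (EuclideanSpace.single i 1)) i| :=
        Finset.abs_sum_le_sum_abs _ _
    _ ≤ ∑ _i : Fin d, ‖fderiv ℝ b x‖ := Finset.sum_le_sum fun i _ => key i
    _ = (d : ℝ) * ‖fderiv ℝ b x‖ := by
        rw [Finset.sum_const, Finset.card_univ, Fintype.card_fin, nsmul_eq_mul]

/-- The key tail estimate: `Upot` is eventually below any level `M`. -/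
private lemma Upot_tail (hA : Assumptions V b) (ε α : ℝ) (hε : 0 < ε) (M : ℝ) :
    ∃ R : ℝ, 1 ≤ R ∧ ∀ x : EuclideanSpace ℝ (Fin d), R ≤ ‖x‖ → Upot V b ε α x ≤ M := by
  obtain ⟨H₀, R₀, hR₀, _, hpos, hco⟩ := hA.coercive
  obtain ⟨B, hB⟩ := hA.bounded_b
  obtain ⟨c, hc0, hc2, hbg⟩ := hA.b_grad_V
  obtain ⟨R₁, hR₁⟩ := hA.hessian_little_o 1 one_pos
  have hB0 : 0 ≤ B := le_trans (by positivity) (hB 0)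
  have hbx : ∀ x, ‖b x‖ ≤ B := fun x => by
    have := hB x; have := norm_nonneg (fderiv ℝ b x); linarith
  have hDbx : ∀ x, ‖fderiv ℝ b x‖ ≤ B := fun x => by
    have := hB x; have := norm_nonneg (b x); linarith
  set κ : ℝ := (1 - 2 * c) / (4 * ε) with hκdef
  have hκ : 0 < κ := by
    apply div_pos <;> [linarith; linarith]
  set C : ℝ := |α * (1 - α) / ε| * B ^ 2 + |α| * ((d : ℝ) * B) with hCdef
  set G : ℝ := max 1 (((d : ℝ) / 2 + max (C - M) 0) / κ) with hGdef
  have hG1 : 1 ≤ G := le_max_left _ _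
  have hκG : (d : ℝ) / 2 + max (C - M) 0 ≤ κ * G := by
    have h := le_max_right 1 (((d : ℝ) / 2 + max (C - M) 0) / κ)
    rw [div_le_iff₀ hκ] at h
    linarith [h]
  refine ⟨max (max R₀ R₁) (max 1 (‖H₀‖ * G)), le_trans (le_max_left 1 _) (le_max_right _ _),
    fun x hx => ?_⟩
  have hx1 : 1 ≤ ‖x‖ := le_trans (le_trans (le_max_left 1 _) (le_max_right _ _)) hx
  have hx0 : x ≠ 0 := by
    intro h; rw [h, norm_zero] at hx1; linarith
  have hxpos : 0 < ‖x‖ := by linarith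
  have hH0 : 0 < ‖H₀‖ := by
    rw [norm_pos_iff]
    intro hz
    have := hpos x hx0
    rw [hz] at this
    simp at this
  set g : ℝ := ‖gradient V x‖ with hgdef
  have hg0 : 0 ≤ g := norm_nonneg _
  -- lower bound on g
  have hxR₀ : R₀ ≤ ‖x‖ := le_trans (le_trans (le_max_left R₀ R₁) (le_max_left _ _)) hx
  have hxR₁ : R₁ ≤ ‖x‖ := le_trans (le_trans (le_max_right R₀ R₁) (le_max_left _ _)) hx
  have hchain : ‖x‖ ^ 2 ≤ ‖x‖ * (‖H₀‖ * g) := by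
    calc ‖x‖ ^ 2 ≤ ⟪x, H₀ (gradient V x)⟫ := hco x hxR₀
      _ ≤ ‖x‖ * ‖H₀ (gradient V x)‖ := real_inner_le_norm _ _
      _ ≤ ‖x‖ * (‖H₀‖ * g) := by
          have := H₀.le_opNorm (gradient V x)
          exact mul_le_mul_of_nonneg_left this (norm_nonneg x)
  have hxg : ‖x‖ ≤ ‖H₀‖ * g := by
    have h2 : ‖x‖ * ‖x‖ ≤ ‖x‖ * (‖H₀‖ * g) := by nlinarith [hchain]
    exact le_of_mul_le_mul_left h2 hxpos
  have hGg : G ≤ g := by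
    have h1 : ‖H₀‖ * G ≤ ‖x‖ :=
      le_trans (le_trans (le_max_right 1 _) (le_max_right _ _)) hx
    have h2 : ‖H₀‖ * G ≤ ‖H₀‖ * g := le_trans h1 hxg
    exact le_of_mul_le_mul_left h2 hH0
  have hg1 : 1 ≤ g := le_trans hG1 hGg
  have hκg : (d : ℝ) / 2 + max (C - M) 0 ≤ κ * g :=
    le_trans hκG (mul_le_mul_of_nonneg_left hGg (le_of_lt hκ))
  -- term estimates
  have t1 : -(1 / (4 * ε)) * g ^ 2 + (1 / (2 * ε)) * ⟪b x, gradient V x⟫ ≤ -(κ * g ^ 2) := by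
    have h1 : (1 / (2 * ε)) * ⟪b x, gradient V x⟫ ≤ (1 / (2 * ε)) * (c * g ^ 2) :=
      mul_le_mul_of_nonneg_left (hbg x) (by positivity)
    have h2 : -(1 / (4 * ε)) * g ^ 2 + (1 / (2 * ε)) * (c * g ^ 2) = -(κ * g ^ 2) := by
      rw [hκdef]; field_simp; ring
    linarith
  have t2 : -(α * (1 - α) / ε) * ‖b x‖ ^ 2 ≤ |α * (1 - α) / ε| * B ^ 2 := by
    have hb2 : ‖b x‖ ^ 2 ≤ B ^ 2 := by nlinarith [hbx x, norm_nonneg (b x)]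
    nlinarith [neg_abs_le (α * (1 - α) / ε), abs_nonneg (α * (1 - α) / ε),
      sq_nonneg (‖b x‖), norm_nonneg (b x)]
  have t3 : (1 / 2 : ℝ) * laplacian V x ≤ (d : ℝ) / 2 * g := by
    have h1 := laplacian_le (V := V) x
    have h2 : ‖fderiv ℝ (fderiv ℝ V) x‖ ≤ 1 * g := hR₁ x hxR₁
    have hd0 : (0:ℝ) ≤ (d:ℝ) := Nat.cast_nonneg d
    nlinarith [h1, h2, hd0]
  have t4 : -(α * diverg b x) ≤ |α| * ((d : ℝ) * B) := by
    have h1 := abs_diverg_le (b := b) x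
    have h2 : ‖fderiv ℝ b x‖ ≤ B := hDbx x
    have h3 : |α * diverg b x| ≤ |α| * ((d : ℝ) * B) := by
      rw [abs_mul]
      have hd0 : (0:ℝ) ≤ (d:ℝ) := Nat.cast_nonneg d
      have : |diverg b x| ≤ (d : ℝ) * B := le_trans h1 (by nlinarith)
      exact mul_le_mul_of_nonneg_left this (abs_nonneg α)
    linarith [neg_abs_le (α * diverg b x)]
  -- combine
  have hU : Upot V b ε α x ≤ -(κ * g ^ 2) + (d : ℝ) / 2 * g + C := by
    unfold Upot
    rw [hCdef]
    linarith [t1, t2, t3, t4]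
  have hmax1 : C - M ≤ max (C - M) 0 := le_max_left _ _
  have hmax0 : (0:ℝ) ≤ max (C - M) 0 := le_max_right _ _
  clear_value κ C G g
  have hp1 : (d : ℝ) / 2 * g + max (C - M) 0 * g ≤ κ * g ^ 2 := by
    nlinarith [mul_le_mul_of_nonneg_left hκg hg0]
  have hp2 : C - M ≤ max (C - M) 0 * g := by
    nlinarith [mul_le_mul_of_nonneg_left hg1 hmax0]
  linarith [hU, hp1, hp2]

end AuxExpU

/-- Under Assumptions (A1)–(A2), for every `ε > 0`, `α ∈ ℝ` and `T > 0` the function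
`x ↦ exp(T U^{ε,α}(x))` is continuous, bounded by `exp(T ⨆ y, max (U^{ε,α} y) 0)`,
and vanishes at infinity: for every `δ > 0` there is `R > 0` with
`exp(T U^{ε,α}(x)) < δ` whenever `‖x‖ > R`; in particular it belongs to `C₀`. -/
theorem expU_mem_C0 {d : ℕ} (V : EuclideanSpace ℝ (Fin d) → ℝ)
    (b : EuclideanSpace ℝ (Fin d) → EuclideanSpace ℝ (Fin d)) (hA : Assumptions V b)
    (ε α T : ℝ) (hε : 0 < ε) (hT : 0 < T) :
    Continuous (fun x : EuclideanSpace ℝ (Fin d) => Real.exp (T * Upot V b ε α x)) ∧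
      (∀ x : EuclideanSpace ℝ (Fin d),
        Real.exp (T * Upot V b ε α x) ≤ Real.exp (T * ⨆ y, max (Upot V b ε α y) 0)) ∧
      (∀ δ > (0 : ℝ), ∃ Rδ > (0 : ℝ), ∀ x : EuclideanSpace ℝ (Fin d),
        Rδ < ‖x‖ → Real.exp (T * Upot V b ε α x) < δ) ∧
      Tendsto (fun x : EuclideanSpace ℝ (Fin d) => Real.exp (T * Upot V b ε α x))
        (cocompact (EuclideanSpace ℝ (Fin d))) (nhds 0) := by
  obtain ⟨R₂, hR₂1, hR₂⟩ := Upot_tail hA ε α hε 0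
  have hcont : Continuous (Upot V b ε α) := Upot_cont hA ε α
  have hexp : Continuous (fun x : EuclideanSpace ℝ (Fin d) =>
      Real.exp (T * Upot V b ε α x)) :=
    Real.continuous_exp.comp (continuous_const.mul hcont)
  -- bounded above
  obtain ⟨C₁, hC₁⟩ := (isCompact_closedBall (0 : EuclideanSpace ℝ (Fin d)) R₂
    ).exists_bound_of_continuousOn (hcont.continuousOn)
  have hBdd : BddAbove (Set.range fun y => max (Upot V b ε α y) 0) := by
    refine ⟨max C₁ 0, ?_⟩
    rintro _ ⟨y, rfl⟩
    rcases le_or_gt ‖y‖ R₂ with h | h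
    · have hy : y ∈ Metric.closedBall (0 : EuclideanSpace ℝ (Fin d)) R₂ := by
        simpa [Metric.mem_closedBall, dist_eq_norm] using h
      have := hC₁ y hy
      have h2 : Upot V b ε α y ≤ C₁ := le_trans (Real.le_norm_self _) this
      exact max_le_max h2 le_rfl
    · have := hR₂ y (le_of_lt h)
      simp only [max_le_iff]
      exact ⟨le_trans this (le_max_right _ _), le_max_right _ _⟩
  have hsup : ∀ x : EuclideanSpace ℝ (Fin d),
      Real.exp (T * Upot V b ε α x) ≤ Real.exp (T * ⨆ y, max (Upot V b ε α y) 0) := by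
    intro x
    have h1 : Upot V b ε α x ≤ ⨆ y, max (Upot V b ε α y) 0 :=
      le_trans (le_max_left _ _) (le_ciSup hBdd x)
    exact Real.exp_le_exp.mpr (mul_le_mul_of_nonneg_left h1 (le_of_lt hT))
  -- vanishing
  have hvan : ∀ δ > (0 : ℝ), ∃ Rδ > (0 : ℝ), ∀ x : EuclideanSpace ℝ (Fin d),
      Rδ < ‖x‖ → Real.exp (T * Upot V b ε α x) < δ := by
    intro δ hδ
    obtain ⟨R, hR1, hR⟩ := Upot_tail hA ε α hε ((Real.log δ - 1) / T)
    refine ⟨R, by linarith, fun x hx => ?_⟩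
    have hU := hR x (le_of_lt hx)
    have h1 : T * Upot V b ε α x ≤ Real.log δ - 1 := by
      have := mul_le_mul_of_nonneg_left hU (le_of_lt hT)
      rwa [mul_div_cancel₀ _ (ne_of_gt hT)] at this
    calc Real.exp (T * Upot V b ε α x) ≤ Real.exp (Real.log δ - 1) :=
          Real.exp_le_exp.mpr h1
      _ < Real.exp (Real.log δ) := Real.exp_lt_exp.mpr (by linarith)
      _ = δ := Real.exp_log hδ
  refine ⟨hexp, hsup, hvan, ?_⟩
  rw [NormedAddCommGroup.tendsto_nhds_zero]
  intro δ hδ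
  obtain ⟨R, hRpos, hR⟩ := hvan δ hδ
  have hmem : {x : EuclideanSpace ℝ (Fin d) | R < ‖x‖} ∈
      cocompact (EuclideanSpace ℝ (Fin d)) := by
    rw [Filter.mem_cocompact]
    refine ⟨Metric.closedBall 0 R, isCompact_closedBall 0 R, ?_⟩
    intro x hx
    simp only [Set.mem_compl_iff, Metric.mem_closedBall, dist_eq_norm, sub_zero,
      not_le] at hx
    exact hx
  filter_upwards [hmem] with x hx
  rw [Real.norm_eq_abs, abs_of_pos (Real.exp_pos _)]
  exact hR x hx
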